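/- Let S be a nonempty set and ℱ a linearly independent family of real-valued functions on S. Let f₁,…,f_D and f̂₁,…,f̂_D be members of ℱ, each list pairwise distinct. Let Z, Ẑ : {1,…,D}×{1,…,T} → ℝ satisfy the non-degeneracy condition that every row of Z and every row of Ẑ is not identically zero in t. For each ℓ ∈ S and t, let p_{ℓ,t} : ℝ → ℝ be a nonnegative integrable probability density whose Fourier transform vanishes only on a Lebesgue-null set. If for every ℓ ∈ S, t ∈ {1,…,T} and x ∈ ℝ, p_{ℓ,t}(x − Σ_j f_j(ℓ) Z_{j,t}) = p_{ℓ,t}(x − Σ_j f̂_j(ℓ) Ẑ_{j,t}), then there exists a permutation σ of {1,…,D} with f̂_j = f_{σ(j)} and Ẑ_{j,t} = Z_{σ(j),t} for all j, t. -/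

import Mathlib

/-!
Equality of the two observation densities says that, at every location and time, the noise
density is invariant under translation by the difference of the two factor means. A nonzero
period would make an integrable function periodic, hence of integral zero, so the means agree.
Linear independence of `ℱ` then matches coefficients: each `fh j` must occur among the `f j'`
(else the nonzero series `Zh j` would vanish), with the same latent series.
-/

open MeasureTheory Filter Function Topology

namespace Function.Periodic

variable {E : Type*} [NormedAddCommGroup E] [NormedSpace ℝ E] {f : ℝ → E} {c : ℝ}

theorem intervalIntegral_neg_nsmul_nsmul (hf : Periodic f c) (hint : Integrable f) (n : ℕ) :
    ∫ x in -(n • c)..n • c, f x = (2 * n) • ∫ x in 0..c, f x := by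
  have h := hf.intervalIntegral_add_zsmul_eq (2 * n) (-(n • c))
    fun _ _ => hint.intervalIntegrable
  rw [hf.intervalIntegral_add_eq (-(n • c)) 0, zero_add] at h
  convert h using 2
  · simp only [zsmul_eq_mul, nsmul_eq_mul]; push_cast; ring
  · rw [← natCast_zsmul]; push_cast; rfl

theorem integral_eq_zero_of_pos (hf : Periodic f c) (hc : 0 < c) (hint : Integrable f) :
    ∫ x, f x = 0 := by
  set k := ∫ x in 0..c, f x
  have hmul : Tendsto (fun n : ℕ => n • c) atTop atTop := by
    simpa only [nsmul_eq_mul] using tendsto_natCast_atTop_atTop.atTop_mul_const hc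
  have hlim : Tendsto (fun n : ℕ => (2 * n) • k) atTop (𝓝 (∫ x, f x)) :=
    (intervalIntegral_tendsto_integral hint (tendsto_neg_atTop_atBot.comp hmul) hmul).congr
      (hf.intervalIntegral_neg_nsmul_nsmul hint)
  -- consecutive terms of the convergent sequence `(2n) • k` differ by `2 • k`
  have hk : (2 : ℕ) • k = 0 := by
    have hdiff := ((hlim.comp (tendsto_add_atTop_nat 1)).sub hlim).congr
      fun n => (by rw [comp_apply, mul_add, mul_one, add_nsmul, add_sub_cancel_left] : _ = 2 • k)
    rw [sub_self] at hdiff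
    exact tendsto_nhds_unique tendsto_const_nhds hdiff
  have hk0 : k = 0 := by
    rwa [two_nsmul, ← two_smul ℝ, smul_eq_zero, or_iff_right two_ne_zero] at hk
  exact tendsto_nhds_unique hlim (by simp [hk0])

theorem integral_eq_zero (hf : Periodic f c) (hc : c ≠ 0) (hint : Integrable f) :
    ∫ x, f x = 0 := by
  rcases hc.lt_or_gt with hc | hc
  exacts [hf.neg.integral_eq_zero_of_pos (neg_pos.mpr hc) hint, hf.integral_eq_zero_of_pos hc hint]

end Function.Periodic

theorem MeasureTheory.Integrable.eq_of_comp_sub_eq {E : Type*} [NormedAddCommGroup E]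
    [NormedSpace ℝ E] {f : ℝ → E} (hint : Integrable f) (h0 : ∫ x, f x ≠ 0) {a b : ℝ}
    (h : ∀ x, f (x - a) = f (x - b)) : a = b := by
  by_contra hab
  have hper : Periodic f (b - a) := fun x => by simpa [add_sub_assoc] using h (x + b)
  exact h0 (hper.integral_eq_zero (sub_ne_zero.mpr (Ne.symm hab)) hint)

namespace LinearIndependent

variable {ι α R M : Type*} [Fintype α] [Semiring R] [AddCommMonoid M] [Module R M] {v : ι → M}
  {F G : α → ι} {u w : α → R}

theorem mapDomain_eq_of_sum_smul_eq (hv : LinearIndependent R v)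
    (h : ∑ a, u a • v (F a) = ∑ a, w a • v (G a)) :
    ((Finsupp.linearEquivFunOnFinite R R α).symm u).mapDomain F =
      ((Finsupp.linearEquivFunOnFinite R R α).symm w).mapDomain G := by
  apply hv
  simp only [Finsupp.linearCombination_mapDomain,
    Finsupp.linearCombination_eq_fintype_linearCombination_apply]
  exact h

theorem coeff_eq_of_sum_smul_eq (hv : LinearIndependent R v) (hF : Injective F)
    (hG : Injective G) (h : ∑ a, u a • v (F a) = ∑ a, w a • v (G a)) {a b : α}
    (hab : F b = G a) : u b = w a := by
  have := DFunLike.congr_fun (hv.mapDomain_eq_of_sum_smul_eq h) (G a)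
  rwa [Finsupp.mapDomain_apply hG, ← hab, Finsupp.mapDomain_apply hF] at this

theorem coeff_eq_zero_of_sum_smul_eq (hv : LinearIndependent R v) (hG : Injective G)
    (h : ∑ a, u a • v (F a) = ∑ a, w a • v (G a)) {a : α} (ha : G a ∉ Set.range F) :
    w a = 0 := by
  have := DFunLike.congr_fun (hv.mapDomain_eq_of_sum_smul_eq h) (G a)
  rwa [Finsupp.mapDomain_apply hG, Finsupp.mapDomain_of_notMem_range _ _ ha, eq_comm] at this

end LinearIndependent

theorem linear_sfp_identifiability_noisy_general {S : Type*}
    (ℱ : Set (S → ℝ))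
    (hli : LinearIndependent ℝ (fun φ : ℱ => (φ : S → ℝ)))
    (D T : ℕ) (f fh : Fin D → S → ℝ)
    (hf : ∀ j, f j ∈ ℱ) (hfh : ∀ j, fh j ∈ ℱ)
    (hfinj : Function.Injective f) (hfhinj : Function.Injective fh)
    (Z Zh : Fin D → Fin T → ℝ)
    (hZh : ∀ d, ∃ t, Zh d t ≠ 0)
    (p : S → Fin T → ℝ → ℝ)
    (hpint : ∀ ℓ t, Integrable (p ℓ t))
    (hprob : ∀ ℓ t, ∫ x, p ℓ t x = 1)
    (heq : ∀ (ℓ : S) (t : Fin T) (x : ℝ),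
      p ℓ t (x - ∑ j, f j ℓ * Z j t) = p ℓ t (x - ∑ j, fh j ℓ * Zh j t)) :
    ∃ σ : Equiv.Perm (Fin D), ∀ j, fh j = f (σ j) ∧ ∀ t, Zh j t = Z (σ j) t := by
  let F : Fin D → ℱ := fun j => ⟨f j, hf j⟩
  let G : Fin D → ℱ := fun j => ⟨fh j, hfh j⟩
  have hF : Injective F := fun a b h => hfinj (congrArg Subtype.val h)
  have hG : Injective G := fun a b h => hfhinj (congrArg Subtype.val h)
  have hmeans : ∀ t, ∑ j, Z j t • (F j : S → ℝ) = ∑ j, Zh j t • (G j : S → ℝ) :=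
    fun t => funext fun ℓ => by
      have hshift := (hpint ℓ t).eq_of_comp_sub_eq (by simp [hprob]) (heq ℓ t)
      simpa [F, G, mul_comm] using hshift
  have hmem : ∀ j, ∃ j', F j' = G j := fun j => by
    by_contra hnot
    obtain ⟨t, ht⟩ := hZh j
    exact ht (hli.coeff_eq_zero_of_sum_smul_eq hG (hmeans t) hnot)
  choose σ hσ using hmem
  have hσinj : Injective σ := fun a b h => hG (by rw [← hσ a, ← hσ b, h])
  exact ⟨Equiv.ofBijective σ hσinj.bijective_of_finite, fun j =>
    ⟨congrArg Subtype.val (hσ j).symm,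
      fun t => (hli.coeff_eq_of_sum_smul_eq hF hG (hmeans t) (hσ j)).symm⟩⟩

/-- **Theorem 1 (Identifiability of Linear SFPs).** Suppose the spatial factors
`f j`, `fh j` are pairwise-distinct members of a linearly independent family `ℱ`
of real-valued functions on `S`, the latent series `Z`, `Zh` are non-degenerate,
and for each location `ℓ` and time `t` the additive noise density `p ℓ t` is a
nonnegative integrable probability density whose characteristic function vanishes
only on a Lebesgue-null set. If the conditional observation densities of the two
linear spatial factor processes agree everywhere, then the spatial factors and
latent time series coincide up to a permutation. -/
theorem linear_sfp_identifiability_noisy {S : Type*} [Nonempty S]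
    (ℱ : Set (S → ℝ))
    (hli : LinearIndependent ℝ (fun φ : ℱ => (φ : S → ℝ)))
    (D T : ℕ) (f fh : Fin D → S → ℝ)
    (hf : ∀ j, f j ∈ ℱ) (hfh : ∀ j, fh j ∈ ℱ)
    (hfinj : Function.Injective f) (hfhinj : Function.Injective fh)
    (Z Zh : Fin D → Fin T → ℝ)
    (hZ : ∀ d, ∃ t, Z d t ≠ 0) (hZh : ∀ d, ∃ t, Zh d t ≠ 0)
    (p : S → Fin T → ℝ → ℝ)
    (hpnn : ∀ ℓ t x, 0 ≤ p ℓ t x)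
    (hpint : ∀ ℓ t, Integrable (p ℓ t))
    (hprob : ∀ ℓ t, ∫ x, p ℓ t x = 1)
    (hzero : ∀ ℓ t,
      volume {s : ℝ | ∫ x : ℝ, Complex.exp (Complex.I * (s : ℂ) * (x : ℂ)) * (p ℓ t x : ℂ) = 0}
        = 0)
    (heq : ∀ (ℓ : S) (t : Fin T) (x : ℝ),
      p ℓ t (x - ∑ j, f j ℓ * Z j t) = p ℓ t (x - ∑ j, fh j ℓ * Zh j t)) :
    ∃ σ : Equiv.Perm (Fin D), ∀ j, fh j = f (σ j) ∧ ∀ t, Zh j t = Z (σ j) t :=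
  linear_sfp_identifiability_noisy_general ℱ hli D T f fh hf hfh hfinj hfhinj Z Zh hZh p hpint hprob
    heq
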